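/- Let p_m = (k+1) / [k(m+1)·binom(m+2+1/k, m+1)] for m ≥ 0, where binom denotes the generalized binomial coefficient. Then (p_m)_{m≥0} is a probability mass function, i.e., p_m ≥ 0 for all m and ∑_{m≥0} p_m = 1. -/

import Mathlib

/-- Generalized binomial coefficient `binom(x, n) = x(x-1)⋯(x-n+1)/n!`. -/
noncomputable def gbinom (x : ℝ) (n : ℕ) : ℝ :=
  (∏ i ∈ Finset.range n, (x - i)) / (Nat.factorial n)

/-- The limiting out-degree probabilities
`p_m = (k+1)/(k(m+1) binom(m+2+1/k, m+1))`. -/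
noncomputable def pLim (k m : ℕ) : ℝ :=
  ((k : ℝ) + 1) / ((k : ℝ) * ((m : ℝ) + 1) * gbinom ((m : ℝ) + 2 + 1 / (k : ℝ)) (m + 1))

/-!
Writing `a = 1/k`, the tails `t_m = ∏_{j<m} (j+1)/(j+2+a)` satisfy `p_m = t_m - t_{m+1}`, so the
`p_m` are nonnegative because `t` is decreasing, and they sum to `t_0 - lim t_m = 1` because
`t_m ≤ 1/(m+1)`.
-/

open Finset Filter Topology
open scoped Nat

theorem Antitone.hasSum_sub_succ {t : ℕ → ℝ} (ht : Antitone t) (hlim : Tendsto t atTop (𝓝 0)) :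
    HasSum (fun n ↦ t n - t (n + 1)) (t 0) := by
  rw [hasSum_iff_tendsto_nat_of_nonneg fun n ↦ sub_nonneg.2 (ht n.le_succ)]
  simp only [sum_range_sub']
  simpa using hlim.const_sub (t 0)

lemma gbinom_add_natCast (x : ℝ) (n : ℕ) :
    gbinom (x + n) n = (∏ j ∈ range n, (x + (j + 1))) / n ! := by
  unfold gbinom
  rw [← prod_range_reflect]
  congr 1
  refine prod_congr rfl fun j hj ↦ ?_
  rw [Nat.cast_sub (by rw [mem_range] at hj; omega), Nat.cast_sub (by rw [mem_range] at hj; omega)]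
  push_cast
  ring

/-- In the limit law with parameter `a = 1/k`, `outdegreeTail a m` is the probability that the
out-degree is at least `m`. -/
noncomputable def outdegreeTail (a : ℝ) (m : ℕ) : ℝ :=
  ∏ j ∈ range m, ((j : ℝ) + 1) / (j + 2 + a)

section outdegreeTail

@[simp]
lemma outdegreeTail_zero_right (a : ℝ) : outdegreeTail a 0 = 1 := prod_range_zero _

lemma outdegreeTail_succ (a : ℝ) (m : ℕ) :
    outdegreeTail a (m + 1) = outdegreeTail a m * ((m + 1) / (m + 2 + a)) :=
  prod_range_succ _ _

lemma outdegreeTail_eq_factorial_div (a : ℝ) (m : ℕ) :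
    outdegreeTail a m = m ! / ∏ j ∈ range m, ((j : ℝ) + 2 + a) := by
  rw [outdegreeTail, prod_div_distrib, ← prod_range_add_one_eq_factorial]
  push_cast
  rfl

variable {a : ℝ}

lemma outdegreeTail_nonneg (ha : -1 < a) (m : ℕ) : 0 ≤ outdegreeTail a m :=
  prod_nonneg fun j _ ↦ div_nonneg (by positivity) (by linarith [(j.cast_nonneg : (0 : ℝ) ≤ j)])

lemma outdegreeTail_antitone (ha : -1 < a) : Antitone (outdegreeTail a) := by
  refine antitone_nat_of_succ_le fun m ↦ ?_
  rw [outdegreeTail_succ]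
  refine mul_le_of_le_one_right (outdegreeTail_nonneg ha m) ((div_le_one ?_).2 (by linarith))
  linarith [(m.cast_nonneg : (0 : ℝ) ≤ m)]

lemma outdegreeTail_le_one_div_succ (ha : 0 ≤ a) (m : ℕ) :
    outdegreeTail a m ≤ 1 / ((m : ℝ) + 1) := by
  induction m with
  | zero => simp
  | succ m ih =>
    calc outdegreeTail a (m + 1) ≤ 1 / ((m : ℝ) + 1) * ((m + 1) / (m + 2)) := by
          rw [outdegreeTail_succ]
          exact mul_le_mul ih (div_le_div_of_nonneg_left (by positivity) (by positivity)
            (by linarith)) (by positivity) (by positivity)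
      _ = 1 / ((↑(m + 1) : ℝ) + 1) := by
          push_cast
          field_simp
          ring

lemma outdegreeTail_tendsto_zero (ha : 0 ≤ a) : Tendsto (outdegreeTail a) atTop (𝓝 0) :=
  squeeze_zero (outdegreeTail_nonneg (by linarith)) (outdegreeTail_le_one_div_succ ha)
    tendsto_one_div_add_atTop_nhds_zero_nat

lemma outdegreeTail_sub_succ (ha : -1 < a) (m : ℕ) :
    outdegreeTail a m - outdegreeTail a (m + 1) =
      (1 + a) / ((m + 1) * gbinom (m + 2 + a) (m + 1)) := by
  have hpos : ∀ j : ℕ, (0 : ℝ) < j + 2 + a := fun j ↦ by linarith [(j.cast_nonneg : (0 : ℝ) ≤ j)]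
  have hbinom :
      gbinom (m + 2 + a) (m + 1) = (∏ j ∈ range (m + 1), ((j : ℝ) + 2 + a)) / (m + 1)! := by
    rw [show (m : ℝ) + 2 + a = (1 + a) + ↑(m + 1) by push_cast; ring, gbinom_add_natCast]
    congr 1
    exact prod_congr rfl fun j _ ↦ by ring
  have hD : 0 < ∏ j ∈ range m, ((j : ℝ) + 2 + a) := prod_pos fun j _ ↦ hpos j
  have hm := hpos m
  rw [outdegreeTail_succ, hbinom, outdegreeTail_eq_factorial_div, prod_range_succ, Nat.factorial_succ]
  push_cast
  field_simp
  ring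

end outdegreeTail

lemma pLim_eq_outdegreeTail_sub_succ {k : ℕ} (hk : k ≠ 0) (m : ℕ) :
    pLim k m = outdegreeTail (1 / k) m - outdegreeTail (1 / k) (m + 1) := by
  have hk' : (k : ℝ) ≠ 0 := Nat.cast_ne_zero.2 hk
  have ha : (-1 : ℝ) < 1 / k := by linarith [(by positivity : (0 : ℝ) ≤ 1 / k)]
  rw [outdegreeTail_sub_succ ha, pLim]
  field_simp

/-- `(p_m)_{m ≥ 0}` is a probability mass function. -/
theorem ktree_outdegree_limit_pmf (k : ℕ) (hk : 1 ≤ k) :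
    (∀ m : ℕ, 0 ≤ pLim k m) ∧ ∑' m : ℕ, pLim k m = 1 := by
  have ha : (0 : ℝ) ≤ 1 / k := by positivity
  have hp : pLim k = fun m ↦ outdegreeTail (1 / k) m - outdegreeTail (1 / k) (m + 1) :=
    funext (pLim_eq_outdegreeTail_sub_succ (by omega))
  have hanti := outdegreeTail_antitone (by linarith : (-1 : ℝ) < 1 / k)
  have hsum := hanti.hasSum_sub_succ (outdegreeTail_tendsto_zero ha)
  rw [outdegreeTail_zero_right, ← hp] at hsum
  exact ⟨fun m ↦ hp ▸ sub_nonneg.2 (hanti m.le_succ), hsum.tsum_eq⟩
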